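/- arXiv:1303.6934 — 2 statements merged into one kernel-verified Lean document; each statement's English description precedes it below -/
import Mathlib

section
/- Let n ≥ 1 be an integer. There exists a constant K > 0, depending only on n, with the following property. Let s ∈ (0,1), let f ∈ L²(Ω), let λ > I, let u be a weak solution of the fractional Laplacian problem and ũ a weak solution of the truncated nonlocal problem, both with the same data f. Assume C₁ > 0 is such that C₁·‖v‖_{H^s(Ω∪Ω_I)} ≤ |||v||| for every test function v. Then both ‖u − ũ‖_{H^s(Ω∪Ω_I)} ≤ (K/(C₁²·s·(λ−I)^{2s}))·‖u‖_{L²(Ω)} and ‖u − ũ‖_{L²(Ω)} ≤ (K/(C₁²·s·(λ−I)^{2s}))·‖u‖_{L²(Ω)} hold. -/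
open MeasureTheory Real Set

noncomputable section

abbrev Eucl (n : ℕ) := EuclideanSpace ℝ (Fin n)

/-- The normalizing constant `c_{n,s}` of the fractional Laplacian. -/
def cns (n : ℕ) (s : ℝ) : ℝ :=
  s * (2 : ℝ) ^ (2 * s) * Real.Gamma ((n + 2) / 2) /
    (Real.Gamma (1 / 2) * Real.Gamma (1 - s))

/-- The interaction domain `Ω_I = {y ∈ ℝⁿ∖Ω : |y−x| < λ for some x ∈ Ω}`. -/
def interDom {n : ℕ} (Ω : Set (Eucl n)) (lam : ℝ) : Set (Eucl n) :=
  {y | y ∉ Ω ∧ ∃ x ∈ Ω, ‖y - x‖ < lam}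

/-- The bilinear form `B_S(u,v) = ∬_S (u(y)−u(x))(v(y)−v(x))/|y−x|^{n+2s} dy dx`. -/
def Bform {n : ℕ} (s : ℝ) (S : Set (Eucl n × Eucl n)) (u v : Eucl n → ℝ) : ℝ :=
  ∫ p in S, (u p.2 - u p.1) * (v p.2 - v p.1) / ‖p.2 - p.1‖ ^ ((n : ℝ) + 2 * s)

/-- `T = {(x,y) ∈ (Ω∪Ω_I)×(Ω∪Ω_I) : |y−x| < λ}`. -/
def Tset {n : ℕ} (Ω : Set (Eucl n)) (lam : ℝ) : Set (Eucl n × Eucl n) :=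
  {p | p.1 ∈ Ω ∪ interDom Ω lam ∧ p.2 ∈ Ω ∪ interDom Ω lam ∧ ‖p.2 - p.1‖ < lam}

/-- The energy seminorm `|||v||| = ((c_{n,s}/4)·B_T(v,v))^{1/2}`. -/
def energyNorm {n : ℕ} (s : ℝ) (Ω : Set (Eucl n)) (lam : ℝ) (v : Eucl n → ℝ) : ℝ :=
  Real.sqrt (cns n s / 4 * Bform s (Tset Ω lam) v v)

/-- The `H^s(D)` norm `(∫_D v² + B_{D×D}(v,v))^{1/2}`. -/
def HsNorm {n : ℕ} (s : ℝ) (D : Set (Eucl n)) (v : Eucl n → ℝ) : ℝ :=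
  Real.sqrt ((∫ x in D, v x ^ 2) + Bform s (D ×ˢ D) v v)

/-- The `L²(Ω)` norm. -/
def L2NormOn {n : ℕ} (Ω : Set (Eucl n)) (v : Eucl n → ℝ) : ℝ :=
  Real.sqrt (∫ x in Ω, v x ^ 2)

/-- The integrand of `B_S(u,v)`. -/
def gagIntegrand {n : ℕ} (s : ℝ) (u v : Eucl n → ℝ) : Eucl n × Eucl n → ℝ :=
  fun p => (u p.2 - u p.1) * (v p.2 - v p.1) / ‖p.2 - p.1‖ ^ ((n : ℝ) + 2 * s)

/-- A test function: measurable, square-integrable, vanishing a.e. off `Ω`,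
with finite Gagliardo energy. -/
def IsTestFun {n : ℕ} (s : ℝ) (Ω : Set (Eucl n)) (v : Eucl n → ℝ) : Prop :=
  Measurable v ∧ Integrable (fun x => v x ^ 2) ∧ (∀ᵐ x ∂volume, x ∉ Ω → v x = 0) ∧
    Integrable (fun p : Eucl n × Eucl n =>
      (v p.2 - v p.1) ^ 2 / ‖p.2 - p.1‖ ^ ((n : ℝ) + 2 * s))

/-- Weak solution of the fractional Laplacian problem with data `f`. -/
def IsFracSol {n : ℕ} (s : ℝ) (Ω : Set (Eucl n)) (f u : Eucl n → ℝ) : Prop :=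
  IsTestFun s Ω u ∧ ∀ v, IsTestFun s Ω v →
    Integrable (gagIntegrand s u v) ∧
    cns n s / 2 * Bform s Set.univ u v = ∫ x in Ω, f x * v x

/-- Weak solution of the truncated nonlocal problem with data `f`. -/
def IsTruncSol {n : ℕ} (s : ℝ) (Ω : Set (Eucl n)) (lam : ℝ) (f u : Eucl n → ℝ) : Prop :=
  IsTestFun s Ω u ∧ ∀ v, IsTestFun s Ω v →
    IntegrableOn (gagIntegrand s u v) (Tset Ω lam) ∧
    cns n s / 2 * Bform s (Tset Ω lam) u v = ∫ x in Ω, f x * v x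

/-! Testing both weak formulations with `w = u - ũ` gives
`B_T(w, w) = -∬_{Tᶜ} (u(y) - u(x)) (w(y) - w(x)) / |y - x|^{n+2s}`:
the two problems differ only through the interactions outside `T`. As `diam Ω < λ`, a pair outside
`T` with one point in `Ω` has its other point outside `Ω` at distance at least `λ`, so the tail
integrand is dominated by `|u w|(x) k(y - x) + |u w|(y) k(x - y)` with
`k(z) = |z|^{-n-2s} 1_{|z| ≥ λ}`, and `∫ k = n |B₁| λ^{-2s} / (2s)`.
Cauchy–Schwarz, coercivity and `c_{n,s} / s ≤ 4 e Γ((n+2)/2) / √π` (from `Γ(1 - s) ≥ e⁻¹`) give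
`C₁² ‖w‖²_{H^s} ≤ K λ^{-2s} ‖u‖_{L²} ‖w‖_{H^s}`, and `λ^{-2s} ≤ 1 / (s (λ - I)^{2s})`. -/

theorem Real.exp_neg_one_le_Gamma {t : ℝ} (ht₀ : 0 < t) (ht₁ : t ≤ 1) :
    exp (-1) ≤ Gamma t := by
  have hint : IntegrableOn (fun x => exp (-x) * x ^ (t - 1)) (Ioi 0) :=
    GammaIntegral_convergent ht₀
  have hunit : exp (-1) ≤ ∫ x in Ioc (0 : ℝ) 1, exp (-x) * x ^ (t - 1) := by
    calc exp (-1) = ∫ _ in Ioc (0 : ℝ) 1, exp (-1) := by simp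
      _ ≤ ∫ x in Ioc (0 : ℝ) 1, exp (-x) * x ^ (t - 1) := by
        refine setIntegral_mono_on (integrableOn_const (by simp))
          (hint.mono_set Ioc_subset_Ioi_self) measurableSet_Ioc fun x ⟨hx₀, hx₁⟩ => ?_
        have hexp : exp (-1) ≤ exp (-x) := exp_le_exp.2 (by linarith)
        have hpow : 1 ≤ x ^ (t - 1) := one_le_rpow_of_pos_of_le_one_of_nonpos hx₀ hx₁ (by linarith)
        nlinarith [exp_pos (-1)]
  rw [Gamma_eq_integral ht₀]
  refine hunit.trans (setIntegral_mono_set hint ?_ Ioc_subset_Ioi_self.eventuallyLE)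
  filter_upwards [ae_restrict_mem measurableSet_Ioi] with x hx
  exact mul_nonneg (exp_pos _).le (rpow_nonneg (le_of_lt hx) _)

theorem integral_abs_mul_le_sqrt_mul_sqrt {α : Type*} [MeasurableSpace α] {μ : Measure α}
    {f g : α → ℝ} (hf : MemLp f 2 μ) (hg : MemLp g 2 μ) :
    ∫ x, |f x| * |g x| ∂μ ≤ √(∫ x, f x ^ 2 ∂μ) * √(∫ x, g x ^ 2 ∂μ) := by
  have hsq : ∀ h : α → ℝ, (∫ x, |h x| ^ (2 : ℝ) ∂μ) ^ (1 / (2 : ℝ)) = √(∫ x, h x ^ 2 ∂μ) := by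
    intro h
    simp_rw [sqrt_eq_rpow, rpow_two, sq_abs]
  have h := integral_mul_le_Lp_mul_Lq_of_nonneg Real.HolderConjugate.two_two
    (Filter.Eventually.of_forall fun x => abs_nonneg (f x))
    (Filter.Eventually.of_forall fun x => abs_nonneg (g x))
    (by simpa using hf.norm) (by simpa using hg.norm)
  rwa [hsq, hsq] at h

theorem rpow_neg_le_inv_mul_rpow {s t a c : ℝ} (hs₀ : 0 < s) (hs₁ : s ≤ 1) (ht : 0 ≤ t)
    (hc : 0 < c) (hca : c ≤ a) : a ^ (-t) ≤ (s * c ^ t)⁻¹ := by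
  rw [rpow_neg (hc.le.trans hca)]
  refine inv_anti₀ (by positivity) ?_
  calc s * c ^ t ≤ 1 * a ^ t :=
        mul_le_mul hs₁ (rpow_le_rpow hc.le hca ht) (by positivity) zero_le_one
    _ = a ^ t := one_mul _

section Shear

variable {G : Type*} [AddGroup G] [MeasurableSpace G] [MeasurableAdd₂ G] [MeasurableNeg G]
  {μ : Measure G} [SFinite μ] [μ.IsAddRightInvariant] {g k : G → ℝ}

theorem integrable_mul_comp_sub (hg : Integrable g μ) (hk : Integrable k μ) :
    Integrable (fun p : G × G => g p.1 * k (p.2 - p.1)) (μ.prod μ) :=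
  (measurePreserving_prod_sub μ μ).integrable_comp_of_integrable (hg.mul_prod hk)

theorem integral_mul_comp_sub :
    ∫ p : G × G, g p.1 * k (p.2 - p.1) ∂μ.prod μ = (∫ x, g x ∂μ) * ∫ z, k z ∂μ := by
  rw [← integral_prod_mul g k]
  exact (measurePreserving_prod_sub μ μ).integral_comp
    (MeasurableEquiv.shearSubRight G).measurableEmbedding (fun q : G × G => g q.1 * k q.2)

end Shear

def tailKernel (p lam : ℝ) : ℝ → ℝ := (Ici lam).indicator fun r => r ^ (-p)

theorem tailKernel_nonneg (p lam : ℝ) {r : ℝ} (hr : 0 ≤ r) : 0 ≤ tailKernel p lam r :=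
  indicator_nonneg (fun _ _ => rpow_nonneg hr _) r

theorem tailKernel_of_le {p lam r : ℝ} (h : lam ≤ r) (hr : 0 ≤ r) :
    tailKernel p lam r = (r ^ p)⁻¹ := by
  rw [tailKernel, indicator_of_mem (show r ∈ Ici lam from h), rpow_neg hr]

theorem pow_smul_tailKernel {d : ℕ} (hd : 1 ≤ d) (α lam : ℝ) {r : ℝ} (hr : 0 < r) :
    r ^ (d - 1) • tailKernel (d + α) lam r = (Ici lam).indicator (fun r => r ^ (-1 - α)) r := by
  by_cases hlam : lam ≤ r
  · simp only [tailKernel, indicator_of_mem (show r ∈ Ici lam from hlam), smul_eq_mul]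
    rw [← rpow_natCast, ← rpow_add hr, Nat.cast_sub hd]
    ring_nf
  · simp [tailKernel, indicator_of_notMem (show r ∉ Ici lam from hlam)]

section Radial

variable {E : Type*} [NormedAddCommGroup E] [NormedSpace ℝ E] [FiniteDimensional ℝ E]
  [Nontrivial E] [MeasurableSpace E] [BorelSpace E] (μ : Measure E) [μ.IsAddHaarMeasure]
  {α lam : ℝ}

theorem integrable_tailKernel_norm (hα : 0 < α) (hlam : 0 < lam) :
    Integrable (fun z : E => tailKernel (Module.finrank ℝ E + α) lam ‖z‖) μ := by
  rw [integrable_fun_norm_addHaar μ, integrableOn_congr_fun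
    (fun (r : ℝ) (hr : r ∈ Ioi 0) => pow_smul_tailKernel Module.finrank_pos α lam hr)
    measurableSet_Ioi]
  refine (integrable_indicator_iff measurableSet_Ici).2 ?_ |>.integrableOn
  exact (integrableOn_Ici_iff_integrableOn_Ioi).2 (integrableOn_Ioi_rpow_of_lt (by linarith) hlam)

theorem integral_tailKernel_norm (hα : 0 < α) (hlam : 0 < lam) :
    ∫ z, tailKernel (Module.finrank ℝ E + α) lam ‖z‖ ∂μ =
      Module.finrank ℝ E * μ.real (Metric.ball 0 1) * (lam ^ (-α) / α) := by
  have hradial : ∫ r in Ioi (0 : ℝ), r ^ (Module.finrank ℝ E - 1) •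
      tailKernel (Module.finrank ℝ E + α) lam r = lam ^ (-α) / α := by
    rw [setIntegral_congr_fun measurableSet_Ioi
      (fun (r : ℝ) (hr : r ∈ Ioi 0) => pow_smul_tailKernel Module.finrank_pos α lam hr),
      setIntegral_indicator measurableSet_Ici,
      inter_eq_self_of_subset_right (show Ici lam ⊆ Ioi 0 from fun r hr => hlam.trans_le hr),
      integral_Ici_eq_integral_Ioi, integral_Ioi_rpow_of_lt (by linarith) hlam]
    ring_nf
  rw [integral_fun_norm_addHaar μ, hradial, nsmul_eq_mul, smul_eq_mul, mul_assoc]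

end Radial

section Constant

variable {n : ℕ} {s : ℝ}

theorem cns_pos (hs : s ∈ Ioo (0 : ℝ) 1) : 0 < cns n s := by
  obtain ⟨hs₀, hs₁⟩ := hs
  have hΓ : 0 < Gamma (1 - s) := Gamma_pos_of_pos (by linarith)
  unfold cns
  positivity

theorem cns_div_le (hs : s ∈ Ioo (0 : ℝ) 1) :
    cns n s / (4 * s) ≤ exp 1 * Gamma ((n + 2) / 2) / √π := by
  obtain ⟨hs₀, hs₁⟩ := hs
  have hΓ : exp (-1) ≤ Gamma (1 - s) := exp_neg_one_le_Gamma (by linarith) (by linarith)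
  have hΓinv : (Gamma (1 - s))⁻¹ ≤ exp 1 := by
    simpa [exp_neg] using inv_anti₀ (exp_pos (-1)) hΓ
  have hpow : (2 : ℝ) ^ (2 * s) / 4 ≤ 1 := by
    rw [div_le_one (by norm_num)]
    calc (2 : ℝ) ^ (2 * s) ≤ 2 ^ (2 : ℝ) := rpow_le_rpow_of_exponent_le one_le_two (by linarith)
      _ = 4 := by norm_num
  have hΓn : 0 < Gamma ((n + 2) / 2) := Gamma_pos_of_pos (by positivity)
  calc cns n s / (4 * s)
      = (2 : ℝ) ^ (2 * s) / 4 * (Gamma ((n + 2) / 2) / √π) * (Gamma (1 - s))⁻¹ := by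
        rw [cns, Gamma_one_half_eq]; field_simp
    _ ≤ 1 * (Gamma ((n + 2) / 2) / √π) * exp 1 := by gcongr
    _ = exp 1 * Gamma ((n + 2) / 2) / √π := by ring

/-- `e Γ((n+2)/2) / √π` bounds `c_{n,s} / (4s)` uniformly in `s`, and `n |B₁|` is the area of the
unit sphere. -/
def truncConst (n : ℕ) : ℝ :=
  exp 1 * Gamma ((n + 2) / 2) / √π * (n * volume.real (Metric.ball (0 : Eucl n) 1))

theorem truncConst_pos (hn : 1 ≤ n) : 0 < truncConst n := by
  have hΓ : 0 < Gamma ((n + 2) / 2) := Gamma_pos_of_pos (by positivity)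
  have hball : 0 < volume.real (Metric.ball (0 : Eucl n) 1) :=
    ENNReal.toReal_pos (Metric.measure_ball_pos volume 0 one_pos).ne' measure_ball_lt_top.ne
  have hn' : (0 : ℝ) < n := by exact_mod_cast hn
  unfold truncConst
  positivity

end Constant

section Domain

variable {n : ℕ} {s lam : ℝ} {Ω : Set (Eucl n)}

theorem interDom_eq_thickening_diff (Ω : Set (Eucl n)) (lam : ℝ) :
    interDom Ω lam = Metric.thickening lam Ω \ Ω := by
  ext y
  simp [interDom, Metric.mem_thickening_iff, dist_eq_norm, and_comm]

theorem measurableSet_Tset (hΩ : MeasurableSet Ω) : MeasurableSet (Tset Ω lam) := by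
  have hD : MeasurableSet (Ω ∪ interDom Ω lam) := by
    rw [interDom_eq_thickening_diff]
    exact hΩ.union (Metric.isOpen_thickening.measurableSet.diff hΩ)
  exact (measurable_fst hD).inter ((measurable_snd hD).inter
    (measurableSet_lt (measurable_snd.sub measurable_fst).norm measurable_const))

theorem Bform_eq_setIntegral (S : Set (Eucl n × Eucl n)) (u v : Eucl n → ℝ) :
    Bform s S u v = ∫ p in S, gagIntegrand s u v p := rfl

theorem Bform_self_nonneg (S : Set (Eucl n × Eucl n)) (v : Eucl n → ℝ) :
    0 ≤ Bform s S v v :=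
  integral_nonneg fun _ => div_nonneg (mul_self_nonneg _) (rpow_nonneg (norm_nonneg _) _)

theorem IsTestFun.memLp_two {u : Eucl n → ℝ} (hu : IsTestFun s Ω u) : MemLp u 2 :=
  (memLp_two_iff_integrable_sq hu.1.aestronglyMeasurable).2 hu.2.1

theorem IsTestFun.sub {u v : Eucl n → ℝ} (hu : IsTestFun s Ω u) (hv : IsTestFun s Ω v) :
    IsTestFun s Ω (u - v) := by
  obtain ⟨hmu, h2u, h0u, hGu⟩ := hu
  obtain ⟨hmv, h2v, h0v, hGv⟩ := hv
  refine ⟨hmu.sub hmv, ?_, ?_, ?_⟩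
  · refine ((h2u.const_mul 2).add (h2v.const_mul 2)).mono'
      ((hmu.sub hmv).pow_const 2).aestronglyMeasurable (Filter.Eventually.of_forall fun x => ?_)
    rw [Real.norm_of_nonneg (sq_nonneg _)]
    simp only [Pi.sub_apply, Pi.add_apply]
    nlinarith [sq_nonneg (u x + v x)]
  · filter_upwards [h0u, h0v] with x hxu hxv hx
    simp [hxu hx, hxv hx]
  · refine ((hGu.const_mul 2).add (hGv.const_mul 2)).mono' ?_
      (Filter.Eventually.of_forall fun p => ?_)
    · exact ((((hmu.sub hmv).comp measurable_snd).sub ((hmu.sub hmv).comp measurable_fst)).pow_const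
        2 |>.div (by fun_prop)).aestronglyMeasurable
    · have hd : 0 ≤ ‖p.2 - p.1‖ ^ ((n : ℝ) + 2 * s) := rpow_nonneg (norm_nonneg _) _
      simp only [Pi.add_apply]
      rw [Real.norm_of_nonneg (div_nonneg (sq_nonneg _) hd), ← mul_div_assoc, ← mul_div_assoc,
        ← add_div]
      gcongr
      simp only [Pi.sub_apply]
      nlinarith [sq_nonneg ((u p.2 - u p.1) + (v p.2 - v p.1))]

theorem L2NormOn_eq_sqrt_integral {v : Eucl n → ℝ} (hv : ∀ᵐ x, x ∉ Ω → v x = 0) :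
    L2NormOn Ω v = √(∫ x, v x ^ 2) := by
  rw [L2NormOn, setIntegral_eq_integral_of_ae_compl_eq_zero]
  filter_upwards [hv] with x hx hxΩ
  simp [hx hxΩ]

theorem integral_abs_mul_le_L2NormOn {u w : Eucl n → ℝ} (hu : IsTestFun s Ω u)
    (hw : IsTestFun s Ω w) : ∫ x, |u x| * |w x| ≤ L2NormOn Ω u * L2NormOn Ω w := by
  rw [L2NormOn_eq_sqrt_integral hu.2.2.1, L2NormOn_eq_sqrt_integral hw.2.2.1]
  exact integral_abs_mul_le_sqrt_mul_sqrt hu.memLp_two hw.memLp_two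

theorem L2NormOn_le_HsNorm {D : Set (Eucl n)} (hΩD : Ω ⊆ D) {v : Eucl n → ℝ}
    (hv : IntegrableOn (fun x => v x ^ 2) D) : L2NormOn Ω v ≤ HsNorm s D v := by
  refine sqrt_le_sqrt ?_
  have hmono : ∫ x in Ω, v x ^ 2 ≤ ∫ x in D, v x ^ 2 :=
    setIntegral_mono_set hv (Filter.Eventually.of_forall fun x => sq_nonneg (v x))
      hΩD.eventuallyLE
  linarith [Bform_self_nonneg (s := s) (D ×ˢ D) v]

end Domain

section Truncation

variable {n : ℕ} {s lam : ℝ} {Ω : Set (Eucl n)} {f u ut w : Eucl n → ℝ}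

theorem Bform_Tset_sub_eq_neg_tail (hc : cns n s ≠ 0) (hΩ : MeasurableSet Ω)
    (hu : IsFracSol s Ω f u) (hut : IsTruncSol s Ω lam f ut) :
    Bform s (Tset Ω lam) (u - ut) (u - ut) =
      -∫ p in (Tset Ω lam)ᶜ, gagIntegrand s u (u - ut) p := by
  obtain ⟨hintu, hequ⟩ := hu.2 (u - ut) (hu.1.sub hut.1)
  obtain ⟨hintut, hequt⟩ := hut.2 (u - ut) (hu.1.sub hut.1)
  have hsame : Bform s univ u (u - ut) = Bform s (Tset Ω lam) ut (u - ut) :=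
    mul_left_cancel₀ (div_ne_zero hc two_ne_zero) (hequ.trans hequt.symm)
  have hsplit : Bform s univ u (u - ut) =
      Bform s (Tset Ω lam) u (u - ut) + ∫ p in (Tset Ω lam)ᶜ, gagIntegrand s u (u - ut) p := by
    rw [Bform, Measure.restrict_univ]
    exact (integral_add_compl (measurableSet_Tset hΩ) hintu).symm
  have hlin : Bform s (Tset Ω lam) (u - ut) (u - ut) =
      Bform s (Tset Ω lam) u (u - ut) - Bform s (Tset Ω lam) ut (u - ut) := by
    rw [Bform_eq_setIntegral, Bform_eq_setIntegral, Bform_eq_setIntegral,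
      ← integral_sub hintu.integrableOn hintut]
    congr 1 with p
    simp only [gagIntegrand, Pi.sub_apply]
    ring
  linarith

theorem abs_gagIntegrand_le_of_notMem_Tset (hΩ : ∀ x ∈ Ω, ∀ y ∈ Ω, ‖y - x‖ < lam)
    {p : Eucl n × Eucl n} (hp : p ∉ Tset Ω lam)
    (h₁ : p.1 ∉ Ω → u p.1 = 0 ∧ w p.1 = 0) (h₂ : p.2 ∉ Ω → u p.2 = 0 ∧ w p.2 = 0) :
    |gagIntegrand s u w p| ≤
      |u p.1| * |w p.1| * tailKernel (n + 2 * s) lam ‖p.2 - p.1‖ +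
        |u p.2| * |w p.2| * tailKernel (n + 2 * s) lam ‖p.1 - p.2‖ := by
  obtain ⟨x, y⟩ := p
  simp only [Tset, interDom, mem_ofPred_eq, mem_union, not_and, not_lt] at hp h₁ h₂ ⊢
  by_cases hx : x ∈ Ω <;> by_cases hy : y ∈ Ω
  · exact absurd (hΩ x hx y hy) (not_lt.2 (hp (Or.inl hx) (Or.inl hy)))
  · obtain ⟨huy, hwy⟩ := h₂ hy
    have hxy : lam ≤ ‖y - x‖ := by
      by_contra! h
      exact absurd h (not_lt.2 (hp (Or.inl hx) (Or.inr ⟨hy, x, hx, h⟩)))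
    calc |gagIntegrand s u w (x, y)| = |u x| * |w x| * tailKernel (n + 2 * s) lam ‖y - x‖ := by
          rw [tailKernel_of_le hxy (norm_nonneg _), gagIntegrand, abs_div, abs_mul,
            abs_of_nonneg (rpow_nonneg (norm_nonneg _) _)]
          simp [huy, hwy, div_eq_mul_inv]
      _ ≤ _ := le_add_of_nonneg_right
          (mul_nonneg (by positivity) (tailKernel_nonneg _ _ (norm_nonneg _)))
  · obtain ⟨hux, hwx⟩ := h₁ hx
    have hxy : lam ≤ ‖x - y‖ := by
      by_contra! h
      exact absurd (norm_sub_rev x y ▸ h) (not_lt.2 (hp (Or.inr ⟨hx, y, hy, h⟩) (Or.inl hy)))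
    calc |gagIntegrand s u w (x, y)| = |u y| * |w y| * tailKernel (n + 2 * s) lam ‖x - y‖ := by
          rw [tailKernel_of_le hxy (norm_nonneg _), gagIntegrand, abs_div, abs_mul,
            abs_of_nonneg (rpow_nonneg (norm_nonneg _) _), norm_sub_rev]
          simp [hux, hwx, div_eq_mul_inv]
      _ ≤ _ := le_add_of_nonneg_left
          (mul_nonneg (by positivity) (tailKernel_nonneg _ _ (norm_nonneg _)))
  · obtain ⟨hux, hwx⟩ := h₁ hx
    obtain ⟨huy, hwy⟩ := h₂ hy
    simp only [gagIntegrand, hux, hwx, huy, hwy, sub_zero, mul_zero, zero_div, abs_zero]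
    exact add_nonneg (mul_nonneg (by positivity) (tailKernel_nonneg _ _ (norm_nonneg _)))
      (mul_nonneg (by positivity) (tailKernel_nonneg _ _ (norm_nonneg _)))

theorem abs_setIntegral_compl_Tset_le (hn : 1 ≤ n) (hs : 0 < s) (hlam : 0 < lam)
    (hΩm : MeasurableSet Ω) (hΩ : ∀ x ∈ Ω, ∀ y ∈ Ω, ‖y - x‖ < lam) (hu : IsTestFun s Ω u)
    (hw : IsTestFun s Ω w) :
    |∫ p in (Tset Ω lam)ᶜ, gagIntegrand s u w p| ≤
      2 * (∫ x, |u x| * |w x|) * ∫ z : Eucl n, tailKernel (n + 2 * s) lam ‖z‖ := by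
  have : Nonempty (Fin n) := ⟨⟨0, hn⟩⟩
  set K : Eucl n → ℝ := fun z => tailKernel (n + 2 * s) lam ‖z‖
  set g : Eucl n → ℝ := fun x => |u x| * |w x|
  set F : Eucl n × Eucl n → ℝ := fun p => g p.1 * K (p.2 - p.1)
  have hg : Integrable g := by
    simpa [g, abs_mul] using (hu.memLp_two.integrable_mul hw.memLp_two).abs
  have hK : Integrable K := by
    simpa [K, finrank_euclideanSpace_fin] using
      integrable_tailKernel_norm (E := Eucl n) volume (by positivity : 0 < 2 * s) hlam
  have hF : Integrable F := integrable_mul_comp_sub hg hK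
  have hFswap : Integrable fun p : Eucl n × Eucl n => F p.swap := hF.swap
  have hvanish : ∀ᵐ x, x ∉ Ω → u x = 0 ∧ w x = 0 := by
    filter_upwards [hu.2.2.1, hw.2.2.1] with x hux hwx hx using ⟨hux hx, hwx hx⟩
  have hdom : ∀ᵐ p ∂(volume.restrict (Tset Ω lam)ᶜ), ‖gagIntegrand s u w p‖ ≤ F p + F p.swap := by
    filter_upwards [ae_restrict_of_ae (Measure.quasiMeasurePreserving_fst.ae hvanish),
      ae_restrict_of_ae (Measure.quasiMeasurePreserving_snd.ae hvanish),
      ae_restrict_mem (measurableSet_Tset hΩm).compl] with p h₁ h₂ hp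
    exact abs_gagIntegrand_le_of_notMem_Tset hΩ hp h₁ h₂
  calc |∫ p in (Tset Ω lam)ᶜ, gagIntegrand s u w p|
      ≤ ∫ p in (Tset Ω lam)ᶜ, F p + F p.swap := norm_integral_le_of_norm_le
        (hF.add hFswap).integrableOn hdom
    _ ≤ ∫ p, F p + F p.swap :=
        setIntegral_le_integral (hF.add hFswap) (Filter.Eventually.of_forall fun p =>
          add_nonneg (mul_nonneg (by positivity) (tailKernel_nonneg _ _ (norm_nonneg _)))
            (mul_nonneg (by positivity) (tailKernel_nonneg _ _ (norm_nonneg _))))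
    _ = 2 * (∫ x, g x) * ∫ z, K z := by
        rw [integral_add hF hFswap, Measure.volume_eq_prod, integral_prod_swap,
          integral_mul_comp_sub]
        ring

theorem energyNorm_sub_sq_le (hn : 1 ≤ n) (hs : s ∈ Ioo (0 : ℝ) 1) (hlam : 0 < lam)
    (hΩm : MeasurableSet Ω) (hΩ : ∀ x ∈ Ω, ∀ y ∈ Ω, ‖y - x‖ < lam)
    (hu : IsFracSol s Ω f u) (hut : IsTruncSol s Ω lam f ut) :
    energyNorm s Ω lam (u - ut) ^ 2 ≤
      truncConst n * lam ^ (-(2 * s)) * ∫ x, |u x| * |(u - ut) x| := by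
  have : Nonempty (Fin n) := ⟨⟨0, hn⟩⟩
  have hc := cns_pos (n := n) hs
  have hK : ∫ z : Eucl n, tailKernel (n + 2 * s) lam ‖z‖ =
      n * volume.real (Metric.ball (0 : Eucl n) 1) * (lam ^ (-(2 * s)) / (2 * s)) := by
    simpa [finrank_euclideanSpace_fin] using
      integral_tailKernel_norm (E := Eucl n) volume (by linarith [hs.1] : 0 < 2 * s) hlam
  have htail := abs_setIntegral_compl_Tset_le hn hs.1 hlam hΩm hΩ hu.1 (hu.1.sub hut.1)
  have hrest : 0 ≤ n * volume.real (Metric.ball (0 : Eucl n) 1) * lam ^ (-(2 * s)) *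
      ∫ x, |u x| * |(u - ut) x| :=
    mul_nonneg (by positivity) (integral_nonneg fun x => by positivity)
  calc energyNorm s Ω lam (u - ut) ^ 2
      = cns n s / 4 * Bform s (Tset Ω lam) (u - ut) (u - ut) :=
        sq_sqrt (mul_nonneg (by positivity) (Bform_self_nonneg _ _))
    _ = cns n s / 4 * -∫ p in (Tset Ω lam)ᶜ, gagIntegrand s u (u - ut) p := by
        rw [Bform_Tset_sub_eq_neg_tail hc.ne' hΩm hu hut]
    _ ≤ cns n s / 4 * (2 * (∫ x, |u x| * |(u - ut) x|) *
          ∫ z : Eucl n, tailKernel (n + 2 * s) lam ‖z‖) := by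
        gcongr
        exact (neg_le_abs _).trans htail
    _ = cns n s / (4 * s) * (n * volume.real (Metric.ball (0 : Eucl n) 1) * lam ^ (-(2 * s)) *
          ∫ x, |u x| * |(u - ut) x|) := by
        rw [hK]
        field_simp [hs.1.ne']
    _ ≤ exp 1 * Gamma ((n + 2) / 2) / √π * (n * volume.real (Metric.ball (0 : Eucl n) 1) *
          lam ^ (-(2 * s)) * ∫ x, |u x| * |(u - ut) x|) :=
        mul_le_mul_of_nonneg_right (cns_div_le hs) hrest
    _ = truncConst n * lam ^ (-(2 * s)) * ∫ x, |u x| * |(u - ut) x| := by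
        unfold truncConst
        ring

theorem HsNorm_sub_le (hn : 1 ≤ n) (hs : s ∈ Ioo (0 : ℝ) 1) (hlam : 0 < lam)
    (hΩm : MeasurableSet Ω) (hΩ : ∀ x ∈ Ω, ∀ y ∈ Ω, ‖y - x‖ < lam)
    (hu : IsFracSol s Ω f u) (hut : IsTruncSol s Ω lam f ut) {C₁ : ℝ} (hC₁ : 0 < C₁)
    (hcoer : C₁ * HsNorm s (Ω ∪ interDom Ω lam) (u - ut) ≤ energyNorm s Ω lam (u - ut)) :
    C₁ ^ 2 * HsNorm s (Ω ∪ interDom Ω lam) (u - ut) ≤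
      truncConst n * lam ^ (-(2 * s)) * L2NormOn Ω u := by
  have hw := hu.1.sub hut.1
  have hH : 0 ≤ HsNorm s (Ω ∪ interDom Ω lam) (u - ut) := sqrt_nonneg _
  have hM : 0 ≤ truncConst n * lam ^ (-(2 * s)) * L2NormOn Ω u :=
    mul_nonneg (mul_nonneg (truncConst_pos hn).le (by positivity)) (sqrt_nonneg _)
  have hsq : (C₁ * HsNorm s (Ω ∪ interDom Ω lam) (u - ut)) ^ 2 ≤
      truncConst n * lam ^ (-(2 * s)) * L2NormOn Ω u * HsNorm s (Ω ∪ interDom Ω lam) (u - ut) :=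
    calc _ ≤ energyNorm s Ω lam (u - ut) ^ 2 := pow_le_pow_left₀ (by positivity) hcoer 2
      _ ≤ truncConst n * lam ^ (-(2 * s)) * ∫ x, |u x| * |(u - ut) x| :=
          energyNorm_sub_sq_le hn hs hlam hΩm hΩ hu hut
      _ ≤ truncConst n * lam ^ (-(2 * s)) * (L2NormOn Ω u * L2NormOn Ω (u - ut)) :=
          mul_le_mul_of_nonneg_left (integral_abs_mul_le_L2NormOn hu.1 hw)
            (mul_nonneg (truncConst_pos hn).le (by positivity))
      _ ≤ _ := by
          rw [← mul_assoc]
          exact mul_le_mul_of_nonneg_left (L2NormOn_le_HsNorm subset_union_left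
            hw.2.1.integrableOn) hM
  rcases hH.eq_or_lt with hH0 | hHpos
  · rw [← hH0, mul_zero]
    exact hM
  · exact le_of_mul_le_mul_right (by nlinarith) hHpos

end Truncation

/-- For each dimension `n ≥ 1` there is a constant `K > 0`, depending
only on `n`, such that for any `s ∈ (0,1)`, `f ∈ L²(Ω)`, `λ > I = diam Ω`, weak solutions
`u` (fractional Laplacian) and `ũ` (truncated nonlocal), and any `C₁ > 0` with
`C₁·‖v‖_{H^s(Ω∪Ω_I)} ≤ |||v|||` for all test functions `v`, one has
`‖u − ũ‖_{H^s(Ω∪Ω_I)} ≤ (K/(C₁²·s·(λ−I)^{2s}))·‖u‖_{L²(Ω)}` and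
`‖u − ũ‖_{L²(Ω)} ≤ (K/(C₁²·s·(λ−I)^{2s}))·‖u‖_{L²(Ω)}`. -/
theorem stmt1 (n : ℕ) (hn : 1 ≤ n) :
    ∃ K > (0 : ℝ), ∀ (s : ℝ), s ∈ Set.Ioo (0 : ℝ) 1 →
      ∀ (Ω : Set (Eucl n)), Ω.Nonempty → IsOpen Ω → Bornology.IsBounded Ω →
      ∀ (lam : ℝ), Metric.diam Ω < lam →
      ∀ (f : Eucl n → ℝ), Measurable f → IntegrableOn (fun x => f x ^ 2) Ω →
      ∀ (u ut : Eucl n → ℝ),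
        IsFracSol s Ω f u → IsTruncSol s Ω lam f ut →
      ∀ (C₁ : ℝ), 0 < C₁ →
        (∀ v, IsTestFun s Ω v →
          C₁ * HsNorm s (Ω ∪ interDom Ω lam) v ≤ energyNorm s Ω lam v) →
        HsNorm s (Ω ∪ interDom Ω lam) (u - ut) ≤
            K / (C₁ ^ 2 * s * (lam - Metric.diam Ω) ^ (2 * s)) * L2NormOn Ω u ∧
        L2NormOn Ω (u - ut) ≤
            K / (C₁ ^ 2 * s * (lam - Metric.diam Ω) ^ (2 * s)) * L2NormOn Ω u := by
  refine ⟨truncConst n, truncConst_pos hn, fun s hs Ω _ hΩo hΩb lam hlam f _ _ u ut hu hut C₁ hC₁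
    hcoer => ?_⟩
  have hΩ : ∀ x ∈ Ω, ∀ y ∈ Ω, ‖y - x‖ < lam := fun x hx y hy =>
    (dist_eq_norm y x ▸ Metric.dist_le_diam_of_mem hΩb hy hx).trans_lt hlam
  have hH := HsNorm_sub_le hn hs (Metric.diam_nonneg.trans_lt hlam) hΩo.measurableSet hΩ hu hut
    hC₁ (hcoer _ (hu.1.sub hut.1))
  have hscale : lam ^ (-(2 * s)) ≤ (s * (lam - Metric.diam Ω) ^ (2 * s))⁻¹ :=
    rpow_neg_le_inv_mul_rpow hs.1 hs.2.le (by linarith [hs.1]) (sub_pos.2 hlam)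
      (sub_le_self _ Metric.diam_nonneg)
  have hbound : HsNorm s (Ω ∪ interDom Ω lam) (u - ut) ≤
      truncConst n / (C₁ ^ 2 * s * (lam - Metric.diam Ω) ^ (2 * s)) * L2NormOn Ω u := by
    rw [← le_div_iff₀' (by positivity)] at hH
    calc HsNorm s (Ω ∪ interDom Ω lam) (u - ut)
        ≤ truncConst n / C₁ ^ 2 * L2NormOn Ω u * lam ^ (-(2 * s)) := hH.trans_eq (by ring)
      _ ≤ truncConst n / C₁ ^ 2 * L2NormOn Ω u * (s * (lam - Metric.diam Ω) ^ (2 * s))⁻¹ :=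
          mul_le_mul_of_nonneg_left hscale
            (mul_nonneg (div_nonneg (truncConst_pos hn).le (sq_nonneg _)) (sqrt_nonneg _))
      _ = _ := by ring
  exact ⟨hbound, (L2NormOn_le_HsNorm subset_union_left (hu.1.sub hut.1).2.1.integrableOn).trans
    hbound⟩
end
end

section
/- Let V be a real vector space, let A : V×V → ℝ be a symmetric bilinear form with A(v,v) ≥ 0 for all v ∈ V, and set |||v||| = (A(v,v))^{1/2}. Let ‖·‖ be a seminorm on V and C₁, C₂ > 0 constants with C₁·‖v‖ ≤ |||v||| ≤ C₂·‖v‖ for all v ∈ V. Let W ⊆ V be a subspace, A_N : V×V → ℝ a bilinear form, F : V → ℝ a linear functional, and C₅ > 0 with A_N(w,w) ≥ C₅·|||w|||² for all w ∈ W. Suppose ũ ∈ V satisfies A(ũ,w) = F(w) for all w ∈ W, and ũ_N ∈ W satisfies A_N(ũ_N,w) = F(w) for all w ∈ W. If v_N ∈ W and D ≥ 0 satisfy |A(v_N,w) − A_N(v_N,w)| ≤ D·|||w||| for all w ∈ W, then ‖ũ − ũ_N‖ ≤ (1 + C₂/(C₁·C₅))·‖ũ − v_N‖ + D/(C₁·C₅).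 -/
open Real

noncomputable section

/-! Split `ũ - ũ_N = (ũ - v_N) + (v_N - ũ_N)`. The discrete part `e = v_N - ũ_N` lies in `W`, so
coercivity and the two Galerkin equations give
`C₅ |||e|||² ≤ A_N(e,e) = -A(ũ - v_N, e) - (A - A_N)(v_N, e) ≤ (|||ũ - v_N||| + D) |||e|||`
by Cauchy–Schwarz for `A`; the equivalence of `|||·|||` and `‖·‖` converts this into the bound. -/

lemma mul_le_of_mul_sq_le_mul {c b x : ℝ} (hb : 0 ≤ b) (hx : 0 ≤ x) (h : c * x ^ 2 ≤ b * x) :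
    c * x ≤ b := by
  rcases hx.eq_or_lt with rfl | hx
  · simpa using hb
  · exact le_of_mul_le_mul_right (by linarith) hx

section StrangLemma

variable {V : Type*} [AddCommGroup V] [Module ℝ V] {A : V →ₗ[ℝ] V →ₗ[ℝ] ℝ}

lemma abs_apply_le_sqrt_mul_sqrt (hAsymm : ∀ v w, A v w = A w v) (hApos : ∀ v, 0 ≤ A v v)
    (v w : V) : |A v w| ≤ √(A v v) * √(A w w) := by
  have hCS : A v w ^ 2 ≤ A v v * A w w := by
    simpa [sq, ← hAsymm v w] using
      LinearMap.BilinForm.apply_mul_apply_le_of_forall_zero_le A hApos v w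
  rw [← sqrt_mul (hApos v)]
  exact abs_le_sqrt hCS

variable {AN : V →ₗ[ℝ] V →ₗ[ℝ] ℝ} {F : V →ₗ[ℝ] ℝ} {W : Submodule ℝ V} {ut utN vN : V} {D : ℝ}

lemma apply_self_galerkin_error_le (hAsymm : ∀ v w, A v w = A w v) (hApos : ∀ v, 0 ≤ A v v)
    (hut : ∀ w ∈ W, A ut w = F w) (hutN : utN ∈ W) (hutNeq : ∀ w ∈ W, AN utN w = F w)
    (hvN : vN ∈ W) (hΔ : ∀ w ∈ W, |A vN w - AN vN w| ≤ D * √(A w w)) :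
    AN (vN - utN) (vN - utN) ≤ (√(A (ut - vN) (ut - vN)) + D) * √(A (vN - utN) (vN - utN)) := by
  set e := vN - utN
  have he : e ∈ W := W.sub_mem hvN hutN
  have hsplit : AN e e = -(A (ut - vN) e + (A vN e - AN vN e)) := by
    have h₁ := hut e he
    have h₂ := hutNeq e he
    simp only [e, map_sub, LinearMap.sub_apply] at h₁ h₂ ⊢
    linarith
  calc AN e e ≤ |A (ut - vN) e| + |A vN e - AN vN e| := by
        rw [hsplit]
        linarith [neg_abs_le (A (ut - vN) e), neg_abs_le (A vN e - AN vN e)]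
    _ ≤ √(A (ut - vN) (ut - vN)) * √(A e e) + D * √(A e e) :=
        add_le_add (abs_apply_le_sqrt_mul_sqrt hAsymm hApos _ _) (hΔ e he)
    _ = (√(A (ut - vN) (ut - vN)) + D) * √(A e e) := by ring

lemma mul_sqrt_apply_self_galerkin_error_le (hAsymm : ∀ v w, A v w = A w v)
    (hApos : ∀ v, 0 ≤ A v v) {C₅ : ℝ} (hcoer : ∀ w ∈ W, C₅ * √(A w w) ^ 2 ≤ AN w w)
    (hut : ∀ w ∈ W, A ut w = F w) (hutN : utN ∈ W) (hutNeq : ∀ w ∈ W, AN utN w = F w)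
    (hvN : vN ∈ W) (hD : 0 ≤ D) (hΔ : ∀ w ∈ W, |A vN w - AN vN w| ≤ D * √(A w w)) :
    C₅ * √(A (vN - utN) (vN - utN)) ≤ √(A (ut - vN) (ut - vN)) + D :=
  mul_le_of_mul_sq_le_mul (by positivity) (sqrt_nonneg _)
    ((hcoer _ (W.sub_mem hvN hutN)).trans
      (apply_self_galerkin_error_le hAsymm hApos hut hutN hutNeq hvN hΔ))

end StrangLemma

theorem stmt13_general (V : Type*) [AddCommGroup V] [Module ℝ V]
    (A : V →ₗ[ℝ] V →ₗ[ℝ] ℝ) (hAsymm : ∀ v w, A v w = A w v) (hApos : ∀ v, 0 ≤ A v v)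
    (N : V → ℝ)
    (hNtri : ∀ v w : V, N (v + w) ≤ N v + N w)
    (C₁ C₂ : ℝ) (hC₁ : 0 < C₁)
    (hlow : ∀ v : V, C₁ * N v ≤ Real.sqrt (A v v))
    (hupp : ∀ v : V, Real.sqrt (A v v) ≤ C₂ * N v)
    (W : Submodule ℝ V)
    (AN : V →ₗ[ℝ] V →ₗ[ℝ] ℝ) (F : V →ₗ[ℝ] ℝ)
    (C₅ : ℝ) (hC₅ : 0 < C₅)
    (hcoer : ∀ w ∈ W, C₅ * Real.sqrt (A w w) ^ 2 ≤ AN w w)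
    (ut : V) (hut : ∀ w ∈ W, A ut w = F w)
    (utN : V) (hutN : utN ∈ W) (hutNeq : ∀ w ∈ W, AN utN w = F w)
    (vN : V) (hvN : vN ∈ W) (D : ℝ) (hD : 0 ≤ D)
    (hΔ : ∀ w ∈ W, |A vN w - AN vN w| ≤ D * Real.sqrt (A w w)) :
    N (ut - utN) ≤ (1 + C₂ / (C₁ * C₅)) * N (ut - vN) + D / (C₁ * C₅) := by
  have htri : N (ut - utN) ≤ N (ut - vN) + N (vN - utN) := by
    simpa only [sub_add_sub_cancel] using hNtri (ut - vN) (vN - utN)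
  have henergy :=
    mul_sqrt_apply_self_galerkin_error_le hAsymm hApos hcoer hut hutN hutNeq hvN hD hΔ
  have hdiscrete : N (vN - utN) ≤ (C₂ * N (ut - vN) + D) / (C₁ * C₅) := by
    rw [le_div_iff₀ (by positivity)]
    calc N (vN - utN) * (C₁ * C₅) ≤ C₅ * √(A (vN - utN) (vN - utN)) := by
          nlinarith [hlow (vN - utN)]
      _ ≤ C₂ * N (ut - vN) + D := by linarith [hupp (ut - vN)]
  calc N (ut - utN) ≤ N (ut - vN) + (C₂ * N (ut - vN) + D) / (C₁ * C₅) := by linarith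
    _ = (1 + C₂ / (C₁ * C₅)) * N (ut - vN) + D / (C₁ * C₅) := by ring

/-- abstract Strang-type estimate in an equivalent seminorm. Let `A`
be a nonnegative symmetric bilinear form on a real vector space `V` with associated
seminorm `|||v||| = √(A(v,v))`, and let `‖·‖` be a seminorm on `V` with
`C₁·‖v‖ ≤ |||v||| ≤ C₂·‖v‖` for all `v`. Let `W ⊆ V` be a subspace, `A_N` a bilinear
form coercive on `W` with constant `C₅ > 0`, and `F` a linear functional. If
`A(ũ,·) = F` on `W`, `ũ_N ∈ W` with `A_N(ũ_N,·) = F` on `W`, and `v_N ∈ W`, `D ≥ 0`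
satisfy `|A(v_N,w) − A_N(v_N,w)| ≤ D·|||w|||` for all `w ∈ W`, then
`‖ũ − ũ_N‖ ≤ (1 + C₂/(C₁·C₅))·‖ũ − v_N‖ + D/(C₁·C₅)`. -/
theorem stmt13 (V : Type*) [AddCommGroup V] [Module ℝ V]
    (A : V →ₗ[ℝ] V →ₗ[ℝ] ℝ) (hAsymm : ∀ v w, A v w = A w v) (hApos : ∀ v, 0 ≤ A v v)
    (N : V → ℝ) (hNsmul : ∀ (a : ℝ) (v : V), N (a • v) = |a| * N v)
    (hNtri : ∀ v w : V, N (v + w) ≤ N v + N w)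
    (C₁ C₂ : ℝ) (hC₁ : 0 < C₁) (hC₂ : 0 < C₂)
    (hlow : ∀ v : V, C₁ * N v ≤ Real.sqrt (A v v))
    (hupp : ∀ v : V, Real.sqrt (A v v) ≤ C₂ * N v)
    (W : Submodule ℝ V)
    (AN : V →ₗ[ℝ] V →ₗ[ℝ] ℝ) (F : V →ₗ[ℝ] ℝ)
    (C₅ : ℝ) (hC₅ : 0 < C₅)
    (hcoer : ∀ w ∈ W, C₅ * Real.sqrt (A w w) ^ 2 ≤ AN w w)
    (ut : V) (hut : ∀ w ∈ W, A ut w = F w)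
    (utN : V) (hutN : utN ∈ W) (hutNeq : ∀ w ∈ W, AN utN w = F w)
    (vN : V) (hvN : vN ∈ W) (D : ℝ) (hD : 0 ≤ D)
    (hΔ : ∀ w ∈ W, |A vN w - AN vN w| ≤ D * Real.sqrt (A w w)) :
    N (ut - utN) ≤ (1 + C₂ / (C₁ * C₅)) * N (ut - vN) + D / (C₁ * C₅) :=
  stmt13_general V A hAsymm hApos N hNtri C₁ C₂ hC₁ hlow hupp W AN F C₅ hC₅ hcoer ut hut utN hutN
    hutNeq vN hvN D hD hΔ
end
end
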